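/- Let G be a connected labeled digraph over A. The Stallings equivalence ≡_S of G (the least equivalence relation on vertices closed under the folding rules) coincides with the equivalence relation relating x and y whenever there is a path from x to y in G whose label is the identity element of the free group F(A). -/

import Mathlib

open List

section Prelude

variable {A V : Type*}

structure LDigraph (V A : Type*) where
  E : Set (V × A × V)

namespace LDigraph

inductive Step (G : LDigraph V A) : V → V → FreeGroup A → Prop
  | fwd {x a y} : (x, a, y) ∈ G.E → Step G x y (FreeGroup.of a)
  | bwd {x a y} : (x, a, y) ∈ G.E → Step G y x (FreeGroup.of a)⁻¹

inductive PathLabel (G : LDigraph V A) : V → V → FreeGroup A → Prop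
  | nil (x) : PathLabel G x x 1
  | cons {x y z g h} : G.Step x y g → PathLabel G y z h → PathLabel G x z (g * h)

inductive PosPath (G : LDigraph V A) : V → V → List A → Prop
  | nil (x) : PosPath G x x []
  | cons {x a y z w} : (x, a, y) ∈ G.E → PosPath G y z w → PosPath G x z (a :: w)

def loopLabels (G : LDigraph V A) (x : V) : Set (FreeGroup A) :=
  {g | G.PathLabel x x g}

def Connected (G : LDigraph V A) : Prop :=
  ∀ x y : V, ∃ g, G.PathLabel x y g

def quot (G : LDigraph V A) (r : Setoid V) : LDigraph (Quotient r) A :=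
  ⟨{e | ∃ x a y, (x, a, y) ∈ G.E ∧ e = (Quotient.mk r x, a, Quotient.mk r y)}⟩

def GroupPreserving (G : LDigraph V A) (r : Setoid V) : Prop :=
  ∀ x : V, G.loopLabels x = (G.quot r).loopLabels (Quotient.mk r x)

end LDigraph

/-- The image of a word in the free group. -/
def wordToFG (w : List A) : FreeGroup A := (w.map FreeGroup.of).prod

def FactorClosed (L : Set (List A)) : Prop := ∀ w ∈ L, ∀ u : List A, u <:+: w → u ∈ L

def Recurrent (L : Set (List A)) : Prop :=
  FactorClosed L ∧ ∀ u ∈ L, ∀ v ∈ L, ∃ w : List A, w ≠ [] ∧ u ++ w ++ v ∈ L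

def UniformlyRecurrent (L : Set (List A)) : Prop :=
  FactorClosed L ∧ ∀ u ∈ L, ∃ N : ℕ, ∀ w ∈ L, N ≤ w.length → u <:+: w

/-- The Rauzy graph `G_{m,k}`: vertices are the words of `L` of length `m`, and every
word `x ∈ L` of length `m+1` gives an edge from `init x` to `tail x` labeled `x(k)`. -/
def rauzy (L : Set (List A)) (m k : ℕ) : LDigraph (List A) A :=
  ⟨{e | ∃ x a, x ∈ L ∧ x.length = m + 1 ∧ x[k]? = some a ∧ e = (x.dropLast, a, x.tail)}⟩

/-- The extension graph `E(w)`, a bipartite graph on two copies of `A`. -/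
def extGraph (L : Set (List A)) (w : List A) : SimpleGraph (A ⊕ A) where
  Adj x y := ∃ a b, a :: (w ++ [b]) ∈ L ∧
    ((x = Sum.inl a ∧ y = Sum.inr b) ∨ (x = Sum.inr b ∧ y = Sum.inl a))
  symm := by constructor; rintro x y ⟨a, b, h, hc⟩; exact ⟨a, b, h, by tauto⟩
  loopless := by
    constructor
    rintro x ⟨a, b, h, ⟨h1, h2⟩ | ⟨h1, h2⟩⟩ <;> rw [h1] at h2 <;> exact absurd h2 (by simp)

/-- The set of genuine vertices of the extension graph of `w`. -/
def extVerts (L : Set (List A)) (w : List A) : Set (A ⊕ A) :=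
  Sum.elim (fun a => a :: w ∈ L) (fun b => w ++ [b] ∈ L)

/-- The extension graph of `w` is connected (all genuine vertices are mutually reachable). -/
def ExtConnected (L : Set (List A)) (w : List A) : Prop :=
  ∀ x ∈ extVerts L w, ∀ y ∈ extVerts L w, (extGraph L w).Reachable x y

/-- The extension graph of order `(d,d)` of the word `y`. -/
def extGraphK (L : Set (List A)) (d : ℕ) (y : List A) : SimpleGraph (List A ⊕ List A) where
  Adj p q := ∃ u v : List A, u.length = d ∧ v.length = d ∧ u ++ y ++ v ∈ L ∧
    ((p = Sum.inl u ∧ q = Sum.inr v) ∨ (p = Sum.inr v ∧ q = Sum.inl u))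
  symm := by constructor; rintro p q ⟨u, v, h1, h2, h3, hc⟩; exact ⟨u, v, h1, h2, h3, by tauto⟩
  loopless := by
    constructor
    rintro p ⟨u, v, _, _, _, ⟨h1, h2⟩ | ⟨h1, h2⟩⟩ <;> rw [h1] at h2 <;> exact absurd h2 (by simp)

/-- A language is suffix-connected if for every nonempty word `w ∈ L` there exists a depth
`1 ≤ d ≤ |w|+1` such that the natural embedding of the left extensions of `w` in the
extension graph `E_{d,d}(tail^{d-1} w)` lies in a single connected component. -/
def SuffixConnected (L : Set (List A)) : Prop :=
  ∀ w ∈ L, w ≠ [] → ∃ d : ℕ, 1 ≤ d ∧ d ≤ w.length + 1 ∧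
    ∀ a b : A, a :: w ∈ L → b :: w ∈ L →
      (extGraphK L d (w.drop (d - 1))).Reachable
        (Sum.inl (a :: w.take (d - 1))) (Sum.inl (b :: w.take (d - 1)))

open Classical in
/-- The number of occurrences of `u` in `w`. -/
noncomputable def occCount (u w : List A) : ℕ :=
  (List.range (w.length + 1)).countP fun i => decide (u <+: w.drop i)

/-- The return set `R_{u,v}`. -/
noncomputable def ReturnSet (L : Set (List A)) (u v : List A) : Set (List A) :=
  {r | r ∈ L ∧ u ++ r ++ v ∈ L ∧ (u ++ v) <+: (u ++ r ++ v) ∧ (u ++ v) <:+ (u ++ r ++ v) ∧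
    occCount (u ++ v) (u ++ r ++ v) = 2}

end Prelude

/-- The Stallings equivalence: the least equivalence relation on the vertices closed under
the folding rules (F) and (F'). -/
inductive StallingsRel {V A : Type*} (G : LDigraph V A) : V → V → Prop
  | refl (x) : StallingsRel G x x
  | symm {x y} : StallingsRel G x y → StallingsRel G y x
  | trans {x y z} : StallingsRel G x y → StallingsRel G y z → StallingsRel G x z
  | fold {x y x' y' u v : V} {a : A} : StallingsRel G x y → StallingsRel G u x' →
      StallingsRel G y' v → (x, a, x') ∈ G.E → (y, a, y') ∈ G.E → StallingsRel G u v
  | fold' {x y x' y' u v : V} {b : A} : StallingsRel G x y → StallingsRel G u x' →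
      StallingsRel G y' v → (x', b, x) ∈ G.E → (y', b, y) ∈ G.E → StallingsRel G u v

/-!
A path from `x` to `y` reads a word `w` over `A × Bool`, and its label is `1` exactly when `w`
freely reduces to the empty word. Follow the path in the quotient of `G` by `≡_S`: this quotient
is folded, so a cancelling pair `a^ε a^-ε` in `w` is a backtrack along two edges whose far ends
are identified by (F) or (F'); deleting the pair keeps a path between the same classes. Reducing
`w` to the empty word leaves `x ≡_S y`. Conversely each folding rule is witnessed by the path
`u ≡ x' ←a x ≡ y →a y' ≡ v` (or its mirror image), whose label is `a⁻¹ a = 1`.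
-/

namespace LDigraph

variable {A V : Type*} {G : LDigraph V A}

theorem PathLabel.trans {x y z : V} {g h : FreeGroup A} (hxy : G.PathLabel x y g)
    (hyz : G.PathLabel y z h) : G.PathLabel x z (g * h) := by
  induction hxy with
  | nil => simpa using hyz
  | cons st _ ih => rw [mul_assoc]; exact .cons st (ih hyz)

theorem PathLabel.of_step {x y : V} {g : FreeGroup A} (h : G.Step x y g) : G.PathLabel x y g := by
  simpa using PathLabel.cons h (.nil y)

theorem Step.symm {x y : V} {g : FreeGroup A} (h : G.Step x y g) : G.Step y x g⁻¹ := by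
  cases h with
  | fwd e => exact .bwd e
  | bwd e => simpa using Step.fwd e

theorem PathLabel.symm {x y : V} {g : FreeGroup A} (h : G.PathLabel x y g) :
    G.PathLabel y x g⁻¹ := by
  induction h with
  | nil => simpa using PathLabel.nil _
  | cons st _ ih => rw [mul_inv_rev]; exact ih.trans (.of_step st.symm)

/-- Traversal of one edge, recorded as a letter of a free-group word: `(a, true)` forwards along
an edge labelled `a`, `(a, false)` backwards. -/
inductive LetterStep (G : LDigraph V A) : V → V → A × Bool → Prop
  | fwd {p a q} : (p, a, q) ∈ G.E → LetterStep G p q (a, true)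
  | bwd {p a q} : (p, a, q) ∈ G.E → LetterStep G q p (a, false)

end LDigraph

namespace StallingsRel

variable {A V : Type*} {G : LDigraph V A}

theorem pathLabel_one {x y : V} (h : StallingsRel G x y) : G.PathLabel x y 1 := by
  induction h with
  | refl x => exact .nil x
  | symm _ ih => simpa using ih.symm
  | trans _ _ ih₁ ih₂ => simpa using ih₁.trans ih₂
  | fold _ _ _ e₁ e₂ ihxy ihu ihv =>
    simpa using ihu.trans ((LDigraph.PathLabel.of_step (.bwd e₁)).trans
      (ihxy.trans ((LDigraph.PathLabel.of_step (.fwd e₂)).trans ihv)))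
  | fold' _ _ _ e₁ e₂ ihxy ihu ihv =>
    simpa using ihu.trans ((LDigraph.PathLabel.of_step (.fwd e₁)).trans
      (ihxy.trans ((LDigraph.PathLabel.of_step (.bwd e₂)).trans ihv)))

/-- The quotient of `G` by `≡_S` is folded. -/
theorem of_backtrack {p q p' q' : V} {a : A} {b : Bool} (h₁ : G.LetterStep p q (a, b))
    (hq : StallingsRel G q p') (h₂ : G.LetterStep p' q' (a, !b)) : StallingsRel G p q' := by
  cases b with
  | true =>
    cases h₁ with | fwd e₁ => cases h₂ with | bwd e₂ => exact .fold' hq (.refl _) (.refl _) e₁ e₂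
  | false =>
    cases h₁ with | bwd e₁ => cases h₂ with | fwd e₂ => exact .fold hq (.refl _) (.refl _) e₁ e₂

end StallingsRel

/-- `StallingsWalk G x y w`: a walk reading the word `w` from the class of `x` to the class of `y`
in the quotient of `G` by `≡_S`. -/
inductive StallingsWalk {V A : Type*} (G : LDigraph V A) : V → V → List (A × Bool) → Prop
  | nil {x y} : StallingsRel G x y → StallingsWalk G x y []
  | cons {x p q y ℓ w} : StallingsRel G x p → G.LetterStep p q ℓ → StallingsWalk G q y w →
      StallingsWalk G x y (ℓ :: w)

namespace StallingsWalk

variable {A V : Type*} {G : LDigraph V A}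

theorem of_stallingsRel_left {x z y : V} {w : List (A × Bool)} (h : StallingsRel G x z)
    (hw : StallingsWalk G z y w) : StallingsWalk G x y w := by
  cases hw with
  | nil h' => exact .nil (h.trans h')
  | cons h' st hw => exact .cons (h.trans h') st hw

theorem of_pathLabel {x y : V} {g : FreeGroup A} (h : G.PathLabel x y g) :
    ∃ w, StallingsWalk G x y w ∧ FreeGroup.mk w = g := by
  induction h with
  | nil x => exact ⟨[], .nil (.refl x), rfl⟩
  | cons st _ ih =>
    obtain ⟨w, hw, rfl⟩ := ih
    cases st with
    | fwd e => exact ⟨(_, true) :: w, .cons (.refl _) (.fwd e) hw, rfl⟩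
    | bwd e => exact ⟨(_, false) :: w, .cons (.refl _) (.bwd e) hw, rfl⟩

theorem of_red_step {x y : V} {w₁ w₂ : List (A × Bool)} (hw : StallingsWalk G x y w₁)
    (hs : FreeGroup.Red.Step w₁ w₂) : StallingsWalk G x y w₂ := by
  obtain @⟨L₁, L₂, a, b⟩ := hs
  induction L₁ generalizing x with
  | nil =>
    cases hw with | cons hx h₁ hw => cases hw with | cons hq h₂ hw =>
      exact hw.of_stallingsRel_left (hx.trans (StallingsRel.of_backtrack h₁ hq h₂))
  | cons ℓ L₁ ih =>
    cases hw with | cons hx h hw => exact .cons hx h (ih hw)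

theorem stallingsRel_of_red_nil {x y : V} {w : List (A × Bool)} (hw : StallingsWalk G x y w)
    (hr : FreeGroup.Red w []) : StallingsRel G x y := by
  induction hr using Relation.ReflTransGen.head_induction_on with
  | refl => cases hw with | nil h => exact h
  | head hs _ ih => exact ih (hw.of_red_step hs)

end StallingsWalk

theorem stallingsRel_iff_pathLabel_one_general {V A : Type*} (G : LDigraph V A)
    (x y : V) : StallingsRel G x y ↔ G.PathLabel x y 1 := by
  refine ⟨StallingsRel.pathLabel_one, fun h => ?_⟩
  obtain ⟨w, hw, hw1⟩ := StallingsWalk.of_pathLabel h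
  obtain ⟨w', hred, hnil⟩ := FreeGroup.Red.exact.mp hw1
  rw [FreeGroup.Red.nil_iff.mp hnil] at hred
  exact hw.stallingsRel_of_red_nil hred

/-- In a connected labeled digraph, the Stallings equivalence coincides with the relation
"joined by a trivially-labeled path". -/
theorem stallingsRel_iff_pathLabel_one {V A : Type*} (G : LDigraph V A) (hG : G.Connected)
    (x y : V) : StallingsRel G x y ↔ G.PathLabel x y 1 :=
  stallingsRel_iff_pathLabel_one_general G x y
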